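/- For every state s₀ ∈ S' and every strategy σ ∈ Σ^Opt, E'_{σ,s₀}(MP) = E_{σ,s₀}(MP | □¬Bad). -/

import Mathlib

open scoped ENNReal NNReal Classical
open Filter

universe u v

variable {S : Type u} {A : Type v}

/-- A finite MDP: `P s a = some d` means action `a` is legal at `s` and `d` is a
probability distribution on `S`; every state has at least one legal action. -/
structure MDP (S : Type u) (A : Type v) [Fintype S] [Fintype A] where
  P : S → A → Option (S → NNReal)
  sum_one : ∀ s a d, P s a = some d → (∑ s', d s') = 1
  exists_legal : ∀ s, ∃ a, (P s a).isSome

/-- Last state of an alternating path starting at `s` with steps `steps`. -/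
def lastState : S → List (A × S) → S
  | s, [] => s
  | _, (_, s') :: rest => lastState s' rest

/-- A finite path: a start state together with a list of (action, next-state) steps. -/
structure FPath (S : Type u) (A : Type v) where
  start : S
  steps : List (A × S)

namespace FPath

def last (ρ : FPath S A) : S := lastState ρ.start ρ.steps

def states (ρ : FPath S A) : List S := ρ.start :: ρ.steps.map Prod.snd

def length (ρ : FPath S A) : ℕ := ρ.steps.length

end FPath

/-- A (raw) strategy: maps each finite path (start state + steps) to a distribution on actions. -/
def Strat (S : Type u) (A : Type v) := S → List (A × S) → A → ℝ≥0∞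

/-- Shifted strategy `σ_ρ` for `ρ = (s₀, pre)`: `σ_ρ(ρ') = σ(ρ·ρ')`. -/
def shiftStrat (σ : Strat S A) (s₀ : S) (pre : List (A × S)) : Strat S A :=
  fun _ steps a => σ s₀ (pre ++ steps) a

/-- Generic cylinder weight (product of strategy- and transition-probabilities along the
steps), relative to a transition kernel `p`. The accumulator `pre` is the path-prefix so far. -/
noncomputable def wtP (p : S → A → S → ℝ≥0∞) (σ : Strat S A) (s₀ : S) :
    List (A × S) → List (A × S) → ℝ≥0∞
  | _, [] => 1
  | pre, (a, s') :: rest =>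
      σ s₀ pre a * p (lastState s₀ pre) a s' * wtP p σ s₀ (pre ++ [(a, s')]) rest
  termination_by pre l => l.length

/-- Generic cylinder probability of path `ρ` from start state `s`, kernel `p`. -/
noncomputable def cylProbP (p : S → A → S → ℝ≥0∞) (σ : Strat S A) (s : S) (ρ : FPath S A) :
    ℝ≥0∞ :=
  if ρ.start = s then wtP p σ ρ.start [] ρ.steps else 0

namespace MDP

variable [Fintype S] [Fintype A]

def legal (M : MDP S A) (s : S) (a : A) : Prop := (M.P s a).isSome

noncomputable def prob (M : MDP S A) (s : S) (a : A) (s' : S) : ℝ≥0∞ :=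
  (M.P s a).elim 0 fun d => (d s' : ℝ≥0∞)

/-- `ρ` is a finite path of `M` from `s`: every action legal, every transition of
positive probability. -/
def IsPathFrom (M : MDP S A) : S → List (A × S) → Prop
  | _, [] => True
  | s, (a, s') :: rest => M.legal s a ∧ 0 < M.prob s a s' ∧ M.IsPathFrom s' rest

def IsPath (M : MDP S A) (ρ : FPath S A) : Prop := M.IsPathFrom ρ.start ρ.steps

/-- `σ` is a strategy: at every finite path it gives a probability distribution on actions
supported on actions legal at the last state. -/
def IsStrategy (M : MDP S A) (σ : Strat S A) : Prop :=
  ∀ s steps, M.IsPathFrom s steps →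
    (∑ a, σ s steps a) = 1 ∧ ∀ a, 0 < σ s steps a → M.legal (lastState s steps) a

/-- Cylinder probability `P_{σ,s}(ρ)` in `M`. -/
noncomputable def cylProb (M : MDP S A) (σ : Strat S A) (s : S) (ρ : FPath S A) : ℝ≥0∞ :=
  cylProbP M.prob σ s ρ

/-- `T` is a set of sink states: each `t ∈ T` has exactly one legal action, leading back
to `t` with probability `1`. -/
def SinkSet (M : MDP S A) (T : Set S) : Prop :=
  ∀ t ∈ T, (∃! a, M.legal t a) ∧ ∀ a, M.legal t a → M.prob t a t = 1

/-- Generic pruned finite-path predicate: all states have positive value `v` and every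
step uses an `opt` state-action pair with positive transition probability in `M`. -/
def IsPathFromPruned (M : MDP S A) (v : S → ℝ≥0∞) (opt : S → A → Prop) :
    S → List (A × S) → Prop
  | s, [] => 0 < v s
  | s, (a, s') :: rest =>
      0 < v s ∧ opt s a ∧ 0 < M.prob s a s' ∧ M.IsPathFromPruned v opt s' rest

/-! ### Reachability -/

/-- `ρ` is a `T`-hitting path: its last state lies in `T` and no other state does. -/
def HitsFirst (T : Set S) (ρ : FPath S A) : Prop :=
  ρ.last ∈ T ∧ ∀ x ∈ ρ.states.dropLast, x ∉ T

/-- `Pr_{σ,s}(◊T)`: sum over `T`-hitting paths starting at `s` of their cylinder probabilities. -/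
noncomputable def prReach (M : MDP S A) (σ : Strat S A) (s : S) (T : Set S) : ℝ≥0∞ :=
  ∑' ρ : {ρ : FPath S A // M.IsPath ρ ∧ HitsFirst T ρ ∧ ρ.start = s}, M.cylProb σ s ρ.1

/-- `Val(s)` for reachability: supremum over strategies of `Pr_{σ,s}(◊T)`. -/
noncomputable def reachVal (M : MDP S A) (T : Set S) (s : S) : ℝ≥0∞ :=
  ⨆ (σ : Strat S A) (_ : M.IsStrategy σ), M.prReach σ s T

/-- `(s,a) ∈ Opt` for reachability. -/
def OptR (M : MDP S A) (T : Set S) (s : S) (a : A) : Prop :=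
  M.legal s a ∧ M.reachVal T s = ∑ s', M.prob s a s' * M.reachVal T s'

/-- `σ ∈ Σ^Opt` for reachability. -/
def SigmaOptR (M : MDP S A) (T : Set S) (σ : Strat S A) : Prop :=
  ∀ s steps, M.IsPathFrom s steps → ∀ a, 0 < σ s steps a → M.OptR T (lastState s steps) a

/-- Transition probabilities of the pruned MDP `M'` for reachability. -/
noncomputable def probR' (M : MDP S A) (T : Set S) (s : S) (a : A) (s' : S) : ℝ≥0∞ :=
  if M.OptR T s a ∧ 0 < M.reachVal T s then
    M.prob s a s' * M.reachVal T s' / M.reachVal T s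
  else 0

/-- `ρ` is a finite path of the pruned MDP `M'` (reachability version). -/
def IsPathR' (M : MDP S A) (T : Set S) (ρ : FPath S A) : Prop :=
  M.IsPathFromPruned (M.reachVal T) (M.OptR T) ρ.start ρ.steps

/-- Cylinder probability `P'_{σ,s}(ρ)` in the pruned MDP `M'` (reachability version). -/
noncomputable def cylProbR' (M : MDP S A) (T : Set S) (σ : Strat S A) (s : S) (ρ : FPath S A) :
    ℝ≥0∞ :=
  cylProbP (M.probR' T) σ s ρ

/-- `Pr'_{σ,s}(◊T)` in the pruned MDP `M'`. -/
noncomputable def prReach' (M : MDP S A) (σ : Strat S A) (s : S) (T : Set S) : ℝ≥0∞ :=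
  ∑' ρ : {ρ : FPath S A // M.IsPathR' T ρ ∧ HitsFirst T ρ ∧ ρ.start = s},
    M.cylProbR' T σ s ρ.1

/-- Probability of hitting `T` for the first time in exactly `r` steps, in `M`. -/
noncomputable def hitLenProb (M : MDP S A) (σ : Strat S A) (s : S) (T : Set S) (r : ℕ) :
    ℝ≥0∞ :=
  ∑' ρ : {ρ : FPath S A // M.IsPath ρ ∧ HitsFirst T ρ ∧ ρ.start = s ∧ ρ.length = r},
    M.cylProb σ s ρ.1

/-- Probability of hitting `T` for the first time in exactly `r` steps, in `M'`. -/
noncomputable def hitLenProb' (M : MDP S A) (σ : Strat S A) (s : S) (T : Set S) (r : ℕ) :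
    ℝ≥0∞ :=
  ∑' ρ : {ρ : FPath S A // M.IsPathR' T ρ ∧ HitsFirst T ρ ∧ ρ.start = s ∧ ρ.length = r},
    M.cylProbR' T σ s ρ.1

/-- Conditional expected length to target `E_{σ,s}(len_T | ◊T)`. -/
noncomputable def condExpLen (M : MDP S A) (σ : Strat S A) (s : S) (T : Set S) : ℝ≥0∞ :=
  ∑' r : ℕ, (r : ℝ≥0∞) * M.hitLenProb σ s T r / M.prReach σ s T

/-- Expected length to target in `M'`, `E'_{σ,s}(len_T)`; `∞` unless `Pr'_{σ,s}(◊T) = 1`. -/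
noncomputable def expLen' (M : MDP S A) (σ : Strat S A) (s : S) (T : Set S) : ℝ≥0∞ :=
  if M.prReach' σ s T = 1 then ∑' r : ℕ, (r : ℝ≥0∞) * M.hitLenProb' σ s T r else ⊤

/-! ### Safety -/

/-- `Safe_n(σ,s)`: probability of the paths of length `n` from `s` avoiding `Bad`. -/
noncomputable def safeN (M : MDP S A) (σ : Strat S A) (s : S) (Bad : Set S) (n : ℕ) : ℝ≥0∞ :=
  ∑' ρ : {ρ : FPath S A //
      M.IsPath ρ ∧ ρ.start = s ∧ ρ.length = n ∧ ∀ x ∈ ρ.states, x ∉ Bad},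
    M.cylProb σ s ρ.1

/-- `Pr_{σ,s}(□¬Bad) := ⨅ n, Safe_n(σ,s)`. -/
noncomputable def prSafe (M : MDP S A) (σ : Strat S A) (s : S) (Bad : Set S) : ℝ≥0∞ :=
  ⨅ n : ℕ, M.safeN σ s Bad n

/-- `Val(s)` for safety: supremum over strategies of `Pr_{σ,s}(□¬Bad)`. -/
noncomputable def safeVal (M : MDP S A) (Bad : Set S) (s : S) : ℝ≥0∞ :=
  ⨆ (σ : Strat S A) (_ : M.IsStrategy σ), M.prSafe σ s Bad

/-- `(s,a) ∈ Opt` for safety. -/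
def OptS (M : MDP S A) (Bad : Set S) (s : S) (a : A) : Prop :=
  M.legal s a ∧ M.safeVal Bad s = ∑ s', M.prob s a s' * M.safeVal Bad s'

/-- `σ ∈ Σ^Opt` for safety. -/
def SigmaOptS (M : MDP S A) (Bad : Set S) (σ : Strat S A) : Prop :=
  ∀ s steps, M.IsPathFrom s steps → ∀ a, 0 < σ s steps a → M.OptS Bad (lastState s steps) a

/-- `UPreⁱ(Bad)`. -/
def UPre (M : MDP S A) (Bad : Set S) : ℕ → Set S
  | 0 => Bad
  | i + 1 => {s | ∀ a, M.legal s a → ∃ s' ∈ M.UPre Bad i, 0 < M.prob s a s'}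

/-- `Good := S \ UPre*(Bad)`. -/
def GoodSet (M : MDP S A) (Bad : Set S) : Set S := (⋃ i, M.UPre Bad i)ᶜ

/-- `V := S \ (Good ∪ Bad)`. -/
def VSet (M : MDP S A) (Bad : Set S) : Set S := (M.GoodSet Bad ∪ Bad)ᶜ

/-- `Pr_{σ,s}(GoodCyl(ρ)) := P_{σ,s}(ρ) · Pr_{σ_ρ, last(ρ)}(□¬Bad)`. -/
noncomputable def goodCyl (M : MDP S A) (σ : Strat S A) (s : S) (Bad : Set S) (ρ : FPath S A) :
    ℝ≥0∞ :=
  M.cylProb σ s ρ * M.prSafe (shiftStrat σ ρ.start ρ.steps) ρ.last Bad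

/-- Transition probabilities of the pruned MDP `M'` for safety. -/
noncomputable def probS' (M : MDP S A) (Bad : Set S) (s : S) (a : A) (s' : S) : ℝ≥0∞ :=
  if M.OptS Bad s a ∧ 0 < M.safeVal Bad s then
    M.prob s a s' * M.safeVal Bad s' / M.safeVal Bad s
  else 0

/-- `ρ` is a finite path of the pruned MDP `M'` (safety version). -/
def IsPathS' (M : MDP S A) (Bad : Set S) (ρ : FPath S A) : Prop :=
  M.IsPathFromPruned (M.safeVal Bad) (M.OptS Bad) ρ.start ρ.steps

/-- Cylinder probability `P'_{σ,s}(ρ)` in the pruned MDP `M'` (safety version). -/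
noncomputable def cylProbS' (M : MDP S A) (Bad : Set S) (σ : Strat S A) (s : S)
    (ρ : FPath S A) : ℝ≥0∞ :=
  cylProbP (M.probS' Bad) σ s ρ

end MDP

/-- `Reward_n(ρ) = ∑_{i<n} R(sᵢ, aᵢ)` for `ρ` starting at `s` with steps `steps`. -/
def rewardOf (R : S → A → ℝ) : S → List (A × S) → ℝ
  | _, [] => 0
  | s, (a, s') :: rest => R s a + rewardOf R s' rest

namespace MDP

variable [Fintype S] [Fintype A]

/-- `E'_{σ,s}(Reward_n)` in the pruned MDP `M'` (safety version). -/
noncomputable def expRewN' (M : MDP S A) (Bad : Set S) (R : S → A → ℝ) (σ : Strat S A)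
    (s : S) (n : ℕ) : ℝ :=
  ∑' ρ : {ρ : FPath S A // M.IsPathS' Bad ρ ∧ ρ.start = s ∧ ρ.length = n},
    (M.cylProbS' Bad σ s ρ.1).toReal * rewardOf R ρ.1.start ρ.1.steps

/-- `E'_{σ,s}(MP) := liminf_n (1/n)·E'_{σ,s}(Reward_n)`. -/
noncomputable def mp' (M : MDP S A) (Bad : Set S) (R : S → A → ℝ) (σ : Strat S A) (s : S) :
    ℝ :=
  Filter.atTop.liminf fun n : ℕ => M.expRewN' Bad R σ s n / n

/-- `E_{σ,s}(Reward_n | □¬Bad)`. -/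
noncomputable def condExpRewN (M : MDP S A) (Bad : Set S) (R : S → A → ℝ) (σ : Strat S A)
    (s : S) (n : ℕ) : ℝ :=
  (∑' ρ : {ρ : FPath S A // M.IsPath ρ ∧ ρ.start = s ∧ ρ.length = n},
    (M.goodCyl σ s Bad ρ.1).toReal * rewardOf R ρ.1.start ρ.1.steps) /
  (M.prSafe σ s Bad).toReal

/-- `E_{σ,s}(MP | □¬Bad) := liminf_n (1/n)·E_{σ,s}(Reward_n | □¬Bad)`. -/
noncomputable def condMP (M : MDP S A) (Bad : Set S) (R : S → A → ℝ) (σ : Strat S A)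
    (s : S) : ℝ :=
  Filter.atTop.liminf fun n : ℕ => M.condExpRewN Bad R σ s n / n

end MDP

/-! For `σ ∈ Σ^Opt` every action played preserves `Val`, so `Val` of the current state is a
martingale of the chain killed on entering `Bad`; as `Val ≤ 1`, this gives
`Pr_{σ_ρ,last ρ}(□¬Bad) ≥ Val(last ρ)`, and the reverse inequality holds for every strategy.
Hence `Pr(GoodCyl(ρ)) = P(ρ)·Val(last ρ)`, and along the pruned transitions
`P(s,a,s')·Val(s')/Val(s)` this telescopes to `Val(s₀)·P'(ρ)`, while paths leaving `M'` carry
no `GoodCyl` mass. So `E(Reward_n | □¬Bad) = E'(Reward_n)` already for every horizon `n`. -/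

namespace List

lemma tsum_subtype_length_eq_zero {X : Type*} (f : List X → ℝ≥0∞) :
    ∑' l : {l : List X // l.length = 0}, f l = f [] := by
  rw [tsum_eq_single ⟨[], rfl⟩]
  rintro ⟨l, hl⟩ hne
  exact absurd (Subtype.ext (List.length_eq_zero_iff.1 hl)) hne

lemma tsum_subtype_length_eq_succ {X : Type*} (f : List X → ℝ≥0∞) (n : ℕ) :
    ∑' l : {l : List X // l.length = n + 1}, f l =
      ∑' x : X, ∑' l : {l : List X // l.length = n}, f (x :: l) := by
  let cons : X × {l : List X // l.length = n} → {l : List X // l.length = n + 1} :=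
    fun p => ⟨p.1 :: p.2.1, by simp [p.2.2]⟩
  have hcons : cons.Injective := by
    rintro ⟨x, l, hl⟩ ⟨y, m, hm⟩ h
    simp only [cons, Subtype.mk.injEq, List.cons.injEq] at h
    obtain ⟨rfl, rfl⟩ := h
    rfl
  have hrange : Function.support (fun l : {l : List X // l.length = n + 1} => f l) ⊆
      Set.range cons := by
    rintro ⟨_ | ⟨x, l⟩, hl⟩ -
    · simp at hl
    · exact ⟨(x, ⟨l, by simpa using hl⟩), rfl⟩
  rw [← hcons.tsum_eq hrange, ENNReal.tsum_prod']

end List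

lemma lastState_append (s : S) (l₁ l₂ : List (A × S)) :
    lastState s (l₁ ++ l₂) = lastState (lastState s l₁) l₂ := by
  induction l₁ generalizing s with
  | nil => rfl
  | cons x xs ih => exact ih x.2

@[simp] lemma lastState_append_singleton (s : S) (l : List (A × S)) (a : A) (s' : S) :
    lastState s (l ++ [(a, s')]) = s' := by
  rw [lastState_append]; rfl

@[simp] lemma wtP_nil (p : S → A → S → ℝ≥0∞) (σ : Strat S A) (s₀ : S) (pre : List (A × S)) :
    wtP p σ s₀ pre [] = 1 := by
  simp [wtP]

lemma wtP_cons (p : S → A → S → ℝ≥0∞) (σ : Strat S A) (s₀ : S) (pre : List (A × S))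
    (a : A) (s' : S) (l : List (A × S)) :
    wtP p σ s₀ pre ((a, s') :: l) =
      σ s₀ pre a * p (lastState s₀ pre) a s' * wtP p σ s₀ (pre ++ [(a, s')]) l := by
  simp [wtP]

namespace MDP

variable [Fintype S] [Fintype A] (M : MDP S A)

lemma isPathFrom_append {s : S} {l₁ l₂ : List (A × S)} :
    M.IsPathFrom s (l₁ ++ l₂) ↔ M.IsPathFrom s l₁ ∧ M.IsPathFrom (lastState s l₁) l₂ := by
  induction l₁ generalizing s with
  | nil => simp [IsPathFrom, lastState]
  | cons x xs ih => simp [IsPathFrom, ih, lastState, and_assoc]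

lemma IsPathFrom.snoc {s s' : S} {a : A} {l : List (A × S)} (hl : M.IsPathFrom s l)
    (ha : M.legal (lastState s l) a) (hs' : M.prob (lastState s l) a s' ≠ 0) :
    M.IsPathFrom s (l ++ [(a, s')]) :=
  M.isPathFrom_append.2 ⟨hl, ha, pos_iff_ne_zero.2 hs', trivial⟩

lemma legal_of_prob_ne_zero {s : S} {a : A} {s' : S} (h : M.prob s a s' ≠ 0) :
    M.legal s a := by
  cases hP : M.P s a with
  | none => simp [prob, hP] at h
  | some d => simp [legal, hP]

def IsStrategyFrom (τ : Strat S A) (t : S) : Prop :=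
  ∀ steps, M.IsPathFrom t steps →
    (∑ a, τ t steps a) = 1 ∧ ∀ a, 0 < τ t steps a → M.legal (lastState t steps) a

lemma IsStrategy.isStrategyFrom_shiftStrat {σ : Strat S A} (hσ : M.IsStrategy σ) {s₀ : S}
    {pre : List (A × S)} (hpre : M.IsPathFrom s₀ pre) :
    M.IsStrategyFrom (shiftStrat σ s₀ pre) (lastState s₀ pre) := by
  intro steps hsteps
  have := hσ s₀ (pre ++ steps) (M.isPathFrom_append.2 ⟨hpre, hsteps⟩)
  rwa [lastState_append] at this

lemma prSafe_congr (Bad : Set S) {σ₁ σ₂ : Strat S A} {t : S}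
    (h : ∀ steps, M.IsPathFrom t steps → σ₁ t steps = σ₂ t steps) :
    M.prSafe σ₁ t Bad = M.prSafe σ₂ t Bad := by
  have hwt : ∀ l pre, M.IsPathFrom t (pre ++ l) →
      wtP M.prob σ₁ t pre l = wtP M.prob σ₂ t pre l := by
    intro l
    induction l with
    | nil => simp
    | cons x xs ih =>
      intro pre hpath
      rw [wtP_cons, wtP_cons, h pre (M.isPathFrom_append.1 hpath).1,
        ih _ (by simpa using hpath)]
  refine iInf_congr fun n => tsum_congr fun ρ => ?_
  obtain ⟨⟨st, steps⟩, hpath, rfl, -⟩ := ρ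
  simp only [cylProb, cylProbP, if_true]
  exact hwt steps [] hpath

noncomputable def someLegal (s : S) : A := (M.exists_legal s).choose

/-- A shifted strategy is only constrained on paths from its new start; completing it to a
genuine strategy lets `safeVal`, a supremum over strategies, bound its safety probability. -/
noncomputable def extendFrom (τ : Strat S A) (t : S) : Strat S A :=
  fun s steps a => if M.IsPathFrom s steps ∧ s = t then τ s steps a
    else if a = M.someLegal (lastState s steps) then 1 else 0

lemma IsStrategyFrom.isStrategy_extendFrom {τ : Strat S A} {t : S}
    (hτ : M.IsStrategyFrom τ t) : M.IsStrategy (M.extendFrom τ t) := by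
  intro s steps hpath
  by_cases hc : M.IsPathFrom s steps ∧ s = t
  · obtain ⟨-, rfl⟩ := hc
    simpa [extendFrom, hpath] using hτ steps hpath
  · simp only [extendFrom, if_neg hc]
    refine ⟨by simp, fun a ha => ?_⟩
    split_ifs at ha with hd
    · exact hd ▸ (M.exists_legal _).choose_spec
    · exact absurd ha (lt_irrefl 0)

lemma prSafe_le_safeVal (Bad : Set S) {τ : Strat S A} {t : S} (hτ : M.IsStrategyFrom τ t) :
    M.prSafe τ t Bad ≤ M.safeVal Bad t := by
  rw [M.prSafe_congr Bad (σ₂ := M.extendFrom τ t) fun steps h => by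
    ext a; simp [extendFrom, h]]
  exact le_iSup₂ (f := fun σ (_ : M.IsStrategy σ) => M.prSafe σ t Bad) _
    hτ.isStrategy_extendFrom

variable (Bad : Set S)

noncomputable def probAvoiding (s : S) (a : A) (s' : S) : ℝ≥0∞ :=
  if s' ∈ Bad then 0 else M.prob s a s'

lemma wtP_probAvoiding {σ : Strat S A} {t : S} :
    ∀ (l pre : List (A × S)), (∀ x ∈ l.map Prod.snd, x ∉ Bad) →
      wtP (M.probAvoiding Bad) σ t pre l = wtP M.prob σ t pre l := by
  intro l
  induction l with
  | nil => simp
  | cons x xs ih =>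
    intro pre havoid
    obtain ⟨a, s'⟩ := x
    simp only [List.map_cons, List.mem_cons, forall_eq_or_imp] at havoid
    rw [wtP_cons, wtP_cons, ih _ havoid.2, probAvoiding, if_neg havoid.1]

lemma isPathFrom_of_wtP_probAvoiding_ne_zero {σ : Strat S A} {t : S} :
    ∀ (l pre : List (A × S)), wtP (M.probAvoiding Bad) σ t pre l ≠ 0 →
      M.IsPathFrom (lastState t pre) l ∧ ∀ x ∈ l.map Prod.snd, x ∉ Bad := by
  intro l
  induction l with
  | nil => simp [IsPathFrom]
  | cons x xs ih =>
    intro pre hwt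
    obtain ⟨a, s'⟩ := x
    rw [wtP_cons] at hwt
    obtain ⟨⟨-, hp⟩, hrest⟩ := mul_ne_zero_iff.1 hwt |>.imp_left mul_ne_zero_iff.1
    have hs' : s' ∉ Bad := fun h => hp (by simp [probAvoiding, h])
    have hprob : M.prob (lastState t pre) a s' ≠ 0 := by simpa [probAvoiding, hs'] using hp
    obtain ⟨hpath, havoid⟩ := ih _ hrest
    rw [lastState_append_singleton] at hpath
    exact ⟨⟨M.legal_of_prob_ne_zero hprob, pos_iff_ne_zero.2 hprob, hpath⟩,
      by simpa [hs'] using havoid⟩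

lemma safeN_of_mem {σ : Strat S A} {t : S} (ht : t ∈ Bad) (n : ℕ) :
    M.safeN σ t Bad n = 0 := by
  rw [safeN, ENNReal.tsum_eq_zero]
  rintro ⟨ρ, -, rfl, -, havoid⟩
  exact absurd ht (havoid _ List.mem_cons_self)

lemma safeN_eq_tsum_wtP_probAvoiding {σ : Strat S A} {t : S} (ht : t ∉ Bad) (n : ℕ) :
    M.safeN σ t Bad n =
      ∑' l : {l : List (A × S) // l.length = n}, wtP (M.probAvoiding Bad) σ t [] l := by
  let toSteps : {ρ : FPath S A //
      M.IsPath ρ ∧ ρ.start = t ∧ ρ.length = n ∧ ∀ x ∈ ρ.states, x ∉ Bad} →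
      {l : List (A × S) // l.length = n} := fun ρ => ⟨ρ.1.steps, ρ.2.2.2.1⟩
  have hinj : toSteps.Injective := by
    rintro ⟨⟨s₁, l₁⟩, h₁⟩ ⟨⟨s₂, l₂⟩, h₂⟩ h
    simp only [Subtype.mk.injEq, FPath.mk.injEq]
    exact ⟨h₁.2.1.trans h₂.2.1.symm, congrArg Subtype.val h⟩
  have hrange : Function.support (fun l : {l : List (A × S) // l.length = n} =>
      wtP (M.probAvoiding Bad) σ t [] l) ⊆ Set.range toSteps := by
    rintro ⟨l, hl⟩ hwt
    obtain ⟨hpath, havoid⟩ := M.isPathFrom_of_wtP_probAvoiding_ne_zero Bad l [] hwt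
    refine ⟨⟨⟨t, l⟩, hpath, rfl, hl, ?_⟩, rfl⟩
    simpa [FPath.states, ht] using havoid
  rw [safeN, ← hinj.tsum_eq hrange]
  refine tsum_congr fun ⟨⟨s, l⟩, _, hs, _, havoid⟩ => ?_
  subst hs
  simp only [cylProb, cylProbP, if_true, toSteps]
  exact (M.wtP_probAvoiding Bad l [] fun x hx => havoid x (List.mem_cons_of_mem _ hx)).symm

lemma safeVal_of_mem {t : S} (ht : t ∈ Bad) : M.safeVal Bad t = 0 :=
  le_antisymm (iSup₂_le fun _ _ => (iInf_le _ 0).trans_eq (M.safeN_of_mem Bad ht 0)) bot_le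

lemma safeVal_le_one (t : S) : M.safeVal Bad t ≤ 1 := by
  refine iSup₂_le fun _ _ => (iInf_le _ 0).trans ?_
  by_cases ht : t ∈ Bad
  · simp [M.safeN_of_mem Bad ht]
  · simp [M.safeN_eq_tsum_wtP_probAvoiding Bad ht, List.tsum_subtype_length_eq_zero]

lemma safeVal_ne_top (t : S) : M.safeVal Bad t ≠ ⊤ :=
  ne_top_of_le_ne_top ENNReal.one_ne_top (M.safeVal_le_one Bad t)

def IsOptSFrom (τ : Strat S A) (t : S) : Prop :=
  ∀ steps, M.IsPathFrom t steps → ∀ a, 0 < τ t steps a → M.OptS Bad (lastState t steps) a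

lemma SigmaOptS.isOptFrom_shiftStrat {σ : Strat S A} (hσ : M.SigmaOptS Bad σ) {s₀ : S}
    {pre : List (A × S)} (hpre : M.IsPathFrom s₀ pre) :
    M.IsOptSFrom Bad (shiftStrat σ s₀ pre) (lastState s₀ pre) := by
  intro steps hsteps a ha
  have := hσ s₀ (pre ++ steps) (M.isPathFrom_append.2 ⟨hpre, hsteps⟩) a ha
  rwa [lastState_append] at this

lemma sum_probAvoiding_mul_safeVal {s : S} {a : A} (h : M.OptS Bad s a) :
    ∑ s', M.probAvoiding Bad s a s' * M.safeVal Bad s' = M.safeVal Bad s := by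
  rw [h.2]
  refine Finset.sum_congr rfl fun s' _ => ?_
  by_cases hs' : s' ∈ Bad
  · simp [M.safeVal_of_mem Bad hs']
  · simp [probAvoiding, hs']

lemma tsum_wtP_probAvoiding_mul_safeVal {τ : Strat S A} {t : S} (hτ : M.IsStrategyFrom τ t)
    (hopt : M.IsOptSFrom Bad τ t) (n : ℕ) :
    ∀ pre : List (A × S), M.IsPathFrom t pre →
      ∑' l : {l : List (A × S) // l.length = n},
        wtP (M.probAvoiding Bad) τ t pre l * M.safeVal Bad (lastState t (pre ++ l.1)) =
      M.safeVal Bad (lastState t pre) := by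
  induction n with
  | zero =>
    intro pre _
    rw [List.tsum_subtype_length_eq_zero fun l =>
      wtP (M.probAvoiding Bad) τ t pre l * M.safeVal Bad (lastState t (pre ++ l))]
    simp
  | succ n ih =>
    intro pre hpre
    set s := lastState t pre
    have hstep : ∀ a s', τ t pre a * (M.probAvoiding Bad s a s' *
        ∑' l : {l : List (A × S) // l.length = n}, wtP (M.probAvoiding Bad) τ t
          (pre ++ [(a, s')]) l * M.safeVal Bad (lastState t (pre ++ [(a, s')] ++ l.1))) =
        τ t pre a * (M.probAvoiding Bad s a s' * M.safeVal Bad s') := by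
      intro a s'
      by_cases hτa : τ t pre a = 0
      · simp [hτa]
      by_cases hk : M.probAvoiding Bad s a s' = 0
      · simp [hk]
      have hprob : M.prob s a s' ≠ 0 := fun h => hk (by simp [probAvoiding, h])
      have hpath := hpre.snoc M ((hτ pre hpre).2 a (pos_iff_ne_zero.2 hτa)) hprob
      rw [ih _ hpath, lastState_append_singleton]
    calc ∑' l : {l : List (A × S) // l.length = n + 1},
          wtP (M.probAvoiding Bad) τ t pre l * M.safeVal Bad (lastState t (pre ++ l.1))
        = ∑ a, τ t pre a * ∑ s', M.probAvoiding Bad s a s' * M.safeVal Bad s' := by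
          rw [List.tsum_subtype_length_eq_succ fun l =>
              wtP (M.probAvoiding Bad) τ t pre l * M.safeVal Bad (lastState t (pre ++ l)),
            tsum_fintype, Fintype.sum_prod_type]
          refine Finset.sum_congr rfl fun a _ => ?_
          rw [Finset.mul_sum]
          refine Finset.sum_congr rfl fun s' _ => ?_
          rw [← hstep, ← ENNReal.tsum_mul_left, ← ENNReal.tsum_mul_left]
          refine tsum_congr fun l => ?_
          rw [wtP_cons, List.append_assoc, List.singleton_append]
          ring
      _ = ∑ a, τ t pre a * M.safeVal Bad s := by
          refine Finset.sum_congr rfl fun a _ => ?_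
          rcases eq_zero_or_pos (τ t pre a) with hτa | hτa
          · simp [hτa]
          · rw [M.sum_probAvoiding_mul_safeVal Bad (hopt pre hpre a hτa)]
      _ = M.safeVal Bad s := by rw [← Finset.sum_mul, (hτ pre hpre).1, one_mul]

lemma safeVal_le_prSafe {τ : Strat S A} {t : S} (hτ : M.IsStrategyFrom τ t)
    (hopt : M.IsOptSFrom Bad τ t) : M.safeVal Bad t ≤ M.prSafe τ t Bad := by
  by_cases ht : t ∈ Bad
  · simp [M.safeVal_of_mem Bad ht]
  refine le_iInf fun n => ?_
  rw [M.safeN_eq_tsum_wtP_probAvoiding Bad ht]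
  refine (M.tsum_wtP_probAvoiding_mul_safeVal Bad hτ hopt n [] trivial).symm.le.trans ?_
  exact ENNReal.tsum_le_tsum fun l => mul_le_of_le_one_right' (M.safeVal_le_one Bad _)

lemma prSafe_eq_safeVal {τ : Strat S A} {t : S} (hτ : M.IsStrategyFrom τ t)
    (hopt : M.IsOptSFrom Bad τ t) : M.prSafe τ t Bad = M.safeVal Bad t :=
  le_antisymm (M.prSafe_le_safeVal Bad hτ) (M.safeVal_le_prSafe Bad hτ hopt)

lemma IsPathFromPruned.pos {v : S → ℝ≥0∞} {opt : S → A → Prop} {s : S} {l : List (A × S)}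
    (h : M.IsPathFromPruned v opt s l) : 0 < v s := by
  cases l with
  | nil => exact h
  | cons x xs => exact h.1

lemma IsPathFromPruned.isPathFrom {v : S → ℝ≥0∞} {opt : S → A → Prop}
    (hlegal : ∀ s a, opt s a → M.legal s a) {s : S} {l : List (A × S)}
    (h : M.IsPathFromPruned v opt s l) : M.IsPathFrom s l := by
  induction l generalizing s with
  | nil => trivial
  | cons x xs ih => exact ⟨hlegal _ _ h.2.1, h.2.2.1, ih h.2.2.2⟩

lemma safeVal_pos_of_optS {s s' : S} {a : A} (h : M.OptS Bad s a)
    (hprob : M.prob s a s' ≠ 0) (hs' : 0 < M.safeVal Bad s') : 0 < M.safeVal Bad s := by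
  rw [h.2]
  exact (ENNReal.mul_pos hprob hs'.ne').trans_le
    (Finset.single_le_sum (f := fun x => M.prob s a x * M.safeVal Bad x) (fun _ _ => zero_le)
      (Finset.mem_univ s'))

lemma isPathFromPruned_of_wtP_ne_zero {σ : Strat S A} {s₀ : S}
    (hopt : M.IsOptSFrom Bad σ s₀) :
    ∀ (l pre : List (A × S)), M.IsPathFrom s₀ pre → wtP M.prob σ s₀ pre l ≠ 0 →
      0 < M.safeVal Bad (lastState s₀ (pre ++ l)) →
      M.IsPathFromPruned (M.safeVal Bad) (M.OptS Bad) (lastState s₀ pre) l := by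
  intro l
  induction l with
  | nil =>
    intro pre _ _ hv
    rwa [List.append_nil] at hv
  | cons x xs ih =>
    intro pre hpre hwt hv
    obtain ⟨a, s'⟩ := x
    rw [wtP_cons] at hwt
    obtain ⟨⟨hσa, hprob⟩, hrest⟩ := mul_ne_zero_iff.1 hwt |>.imp_left mul_ne_zero_iff.1
    have hO := hopt pre hpre a (pos_iff_ne_zero.2 hσa)
    have hpruned := ih _ (hpre.snoc M hO.1 hprob) hrest (by simpa using hv)
    rw [lastState_append_singleton] at hpruned
    exact ⟨M.safeVal_pos_of_optS Bad hO hprob (hpruned.pos M), hO, pos_iff_ne_zero.2 hprob,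
      hpruned⟩

lemma safeVal_mul_probS' {s : S} {a : A} (h : M.OptS Bad s a) (hs : 0 < M.safeVal Bad s)
    (s' : S) : M.safeVal Bad s * M.probS' Bad s a s' = M.prob s a s' * M.safeVal Bad s' := by
  rw [probS', if_pos ⟨h, hs⟩, ENNReal.mul_div_cancel hs.ne' (M.safeVal_ne_top Bad s)]

lemma safeVal_mul_wtP_probS' (σ : Strat S A) (s₀ : S) :
    ∀ (l pre : List (A × S)),
      M.IsPathFromPruned (M.safeVal Bad) (M.OptS Bad) (lastState s₀ pre) l →
      M.safeVal Bad (lastState s₀ pre) * wtP (M.probS' Bad) σ s₀ pre l =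
        wtP M.prob σ s₀ pre l * M.safeVal Bad (lastState s₀ (pre ++ l)) := by
  intro l
  induction l with
  | nil => intro pre _; simp
  | cons x xs ih =>
    intro pre hpruned
    obtain ⟨a, s'⟩ := x
    obtain ⟨hv, hO, -, hrest⟩ := hpruned
    have hIH := ih (pre ++ [(a, s')]) (by simpa using hrest)
    rw [lastState_append_singleton, List.append_assoc, List.singleton_append] at hIH
    rw [wtP_cons, wtP_cons]
    calc M.safeVal Bad (lastState s₀ pre) * (σ s₀ pre a * M.probS' Bad (lastState s₀ pre) a s' *
          wtP (M.probS' Bad) σ s₀ (pre ++ [(a, s')]) xs)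
        = σ s₀ pre a * (M.safeVal Bad (lastState s₀ pre) * M.probS' Bad (lastState s₀ pre) a s') *
          wtP (M.probS' Bad) σ s₀ (pre ++ [(a, s')]) xs := by ring
      _ = σ s₀ pre a * M.prob (lastState s₀ pre) a s' *
          (M.safeVal Bad s' * wtP (M.probS' Bad) σ s₀ (pre ++ [(a, s')]) xs) := by
        rw [M.safeVal_mul_probS' Bad hO hv s']; ring
      _ = _ := by rw [hIH]; ring

lemma goodCyl_eq_cylProb_mul_safeVal {σ : Strat S A} (hσ : M.IsStrategy σ)
    (hopt : M.SigmaOptS Bad σ) (s : S) {ρ : FPath S A} (hρ : M.IsPath ρ) :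
    M.goodCyl σ s Bad ρ = M.cylProb σ s ρ * M.safeVal Bad ρ.last := by
  rw [goodCyl, FPath.last, M.prSafe_eq_safeVal Bad (hσ.isStrategyFrom_shiftStrat M hρ)
    (hopt.isOptFrom_shiftStrat M Bad hρ)]

lemma safeVal_mul_cylProbS' (σ : Strat S A) (s : S) {ρ : FPath S A} (hρ : M.IsPathS' Bad ρ) :
    M.safeVal Bad s * M.cylProbS' Bad σ s ρ = M.cylProb σ s ρ * M.safeVal Bad ρ.last := by
  obtain ⟨st, steps⟩ := ρ
  simp only [cylProbS', cylProb, cylProbP]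
  split_ifs with hst
  · subst hst
    exact M.safeVal_mul_wtP_probS' Bad σ st steps [] hρ
  · simp

lemma isPathS'_of_cylProb_mul_safeVal_ne_zero {σ : Strat S A} (hopt : M.SigmaOptS Bad σ)
    {s : S} {ρ : FPath S A} (h : M.cylProb σ s ρ * M.safeVal Bad ρ.last ≠ 0) :
    M.IsPathS' Bad ρ := by
  obtain ⟨hcyl, hv⟩ := mul_ne_zero_iff.1 h
  obtain ⟨st, steps⟩ := ρ
  simp only [cylProb, cylProbP] at hcyl
  split_ifs at hcyl with hst
  · subst hst
    exact M.isPathFromPruned_of_wtP_ne_zero Bad (hopt st) steps [] trivial hcyl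
      (pos_iff_ne_zero.2 hv)
  · exact absurd rfl hcyl

lemma condExpRewN_eq_expRewN' (R : S → A → ℝ) {σ : Strat S A} (hσ : M.IsStrategy σ)
    (hopt : M.SigmaOptS Bad σ) {s : S} (hs : 0 < M.safeVal Bad s) (n : ℕ) :
    M.condExpRewN Bad R σ s n = M.expRewN' Bad R σ s n := by
  have hprSafe : M.prSafe σ s Bad = M.safeVal Bad s :=
    M.prSafe_eq_safeVal Bad (fun steps h => hσ s steps h) (hopt s)
  let incl : {ρ : FPath S A // M.IsPathS' Bad ρ ∧ ρ.start = s ∧ ρ.length = n} →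
      {ρ : FPath S A // M.IsPath ρ ∧ ρ.start = s ∧ ρ.length = n} :=
    fun ρ => ⟨ρ.1, ρ.2.1.isPathFrom M fun _ _ h => h.1, ρ.2.2⟩
  have hincl : incl.Injective := fun _ _ h => Subtype.ext (congrArg (·.1) h)
  have hsupport : Function.support (fun ρ : {ρ : FPath S A // M.IsPath ρ ∧ ρ.start = s ∧
      ρ.length = n} => (M.goodCyl σ s Bad ρ.1).toReal * rewardOf R ρ.1.start ρ.1.steps) ⊆
      Set.range incl := by
    rintro ⟨ρ, hρ, hrest⟩ hne
    have hgood : M.goodCyl σ s Bad ρ ≠ 0 :=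
      fun h => hne (by simp only [h, ENNReal.toReal_zero, zero_mul])
    rw [M.goodCyl_eq_cylProb_mul_safeVal Bad hσ hopt s hρ] at hgood
    exact ⟨⟨ρ, M.isPathS'_of_cylProb_mul_safeVal_ne_zero Bad hopt hgood, hrest⟩, rfl⟩
  have hterm : ∀ ρ, (M.goodCyl σ s Bad (incl ρ).1).toReal * rewardOf R ρ.1.start ρ.1.steps =
      (M.safeVal Bad s).toReal * ((M.cylProbS' Bad σ s ρ.1).toReal *
        rewardOf R ρ.1.start ρ.1.steps) := by
    intro ρ
    rw [M.goodCyl_eq_cylProb_mul_safeVal Bad hσ hopt s (incl ρ).2.1,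
      ← M.safeVal_mul_cylProbS' Bad σ s ρ.2.1, ENNReal.toReal_mul, mul_assoc]
  rw [condExpRewN, expRewN', ← hincl.tsum_eq hsupport, tsum_congr hterm, tsum_mul_left, hprSafe,
    mul_div_cancel_left₀ _ (ENNReal.toReal_ne_zero.2 ⟨hs.ne', M.safeVal_ne_top Bad s⟩)]

end MDP

theorem stmt18_general {S : Type u} {A : Type v} [Fintype S] [Fintype A]
    (M : MDP S A) (Bad : Set S) (R : S → A → ℝ)
    (s₀ : S) (hs₀ : 0 < M.safeVal Bad s₀)
    (σ : Strat S A) (hσ : M.IsStrategy σ) (hopt : M.SigmaOptS Bad σ) :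
    M.mp' Bad R σ s₀ = M.condMP Bad R σ s₀ := by
  simp only [MDP.mp', MDP.condMP, M.condExpRewN_eq_expRewN' Bad R hσ hopt hs₀]

/-- for every `s₀ ∈ S'` and every `σ ∈ Σ^Opt`,
`E'_{σ,s₀}(MP) = E_{σ,s₀}(MP | □¬Bad)`. -/
theorem stmt18 {S : Type u} {A : Type v} [Fintype S] [Fintype A] [Nonempty S] [Nonempty A]
    (M : MDP S A) (Bad : Set S) (hBad : M.SinkSet Bad) (R : S → A → ℝ)
    (s₀ : S) (hs₀ : 0 < M.safeVal Bad s₀)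
    (σ : Strat S A) (hσ : M.IsStrategy σ) (hopt : M.SigmaOptS Bad σ) :
    M.mp' Bad R σ s₀ = M.condMP Bad R σ s₀ :=
  stmt18_general M Bad R s₀ hs₀ σ hσ hopt
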